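/- arXiv:2011.01093 — 2 statements merged into one kernel-verified Lean document; each statement's English description precedes it below -/
import Mathlib

section
/- Let ω : ℝ → ℝ^q be (r+1)-times continuously differentiable, A ∈ ℝ^{n×n}, B ∈ ℝ^{n×q}, t ∈ ℝ, T ≥ 0. Then ∫_t^{t+T} e^{A(t+T-s)} B ω(s) ds = Σ_{i=0}^{r} (T^{i+1}/(i+1)!) Γ_{ω,i}(T) B ω^{(i)}(t) + O_r(t), where O_r(t) = ∫_t^{t+T} ((t+T-s)^{r+1}/(r+1)!) Γ_{ω,r}(t+T-s) B ω^{(r+1)}(s) ds and Γ_{ω,i}(τ) = Σ_{j=0}^∞ ((i+1)!/(i+1+j)!) A^j τ^j. -/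
/-!
Write `Φ_k(τ) = expPhi A k τ = Σ_j τ^(k+j)/(k+j)! A^j`, so that `Φ_0(τ) = exp(τA)`,
`Φ_{k+1}' = Φ_k`, `Φ_{k+1}(0) = 0` and `Φ_{i+1}(τ) = τ^(i+1)/(i+1)! Γ_i(τ)`. Integrating
`∫_t^{t+T} Φ_k(t+T-s) B ω^{(k)}(s) ds` by parts moves one derivative from `Φ` onto `ω`, produces
the boundary term `Φ_{k+1}(T) B ω^{(k)}(t)` (the one at `s = t+T` vanishes), and leaves
`∫_t^{t+T} Φ_{k+1}(t+T-s) B ω^{(k+1)}(s) ds`. Doing this `r+1` times gives the expansion.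
-/

open MeasureTheory Matrix

/-- The matrix series `Γ_{ω,i}(τ) = Σ_{j=0}^∞ ((i+1)!/(i+1+j)!) A^j τ^j`. -/
noncomputable def Gam {n : ℕ} (A : Matrix (Fin n) (Fin n) ℝ) (i : ℕ) (τ : ℝ) :
    Matrix (Fin n) (Fin n) ℝ :=
  ∑' j : ℕ, (((i + 1).factorial : ℝ) / ((i + 1 + j).factorial) * τ ^ j) • A ^ j

open Nat

lemma hasDerivAt_pow_succ_div_factorial (m : ℕ) (y : ℝ) :
    HasDerivAt (fun x : ℝ => x ^ (m + 1) / (m + 1)!) (y ^ m / m !) y := by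
  refine ((hasDerivAt_pow (m + 1) y).div_const ((m + 1)! : ℝ)).congr_deriv ?_
  rw [Nat.factorial_succ, Nat.add_sub_cancel]
  push_cast
  field_simp

section ExpPhi

variable {𝔸 : Type*} [NormedRing 𝔸] [NormedAlgebra ℝ 𝔸]

/-- `expPhi a k τ = τ ^ k φ_k (τ a)`, where `φ_k(z) = Σ_j z^j/(k+j)!` are the `φ`-functions of
exponential integrators. -/
noncomputable def expPhi (a : 𝔸) (k : ℕ) (τ : ℝ) : 𝔸 :=
  ∑' j : ℕ, (τ ^ (k + j) / (k + j)! : ℝ) • a ^ j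

lemma expPhi_zero_eq_exp (a : 𝔸) (τ : ℝ) : expPhi a 0 τ = NormedSpace.exp (τ • a) := by
  rw [NormedSpace.exp_eq_tsum ℝ, expPhi]
  refine tsum_congr fun j => ?_
  rw [zero_add, smul_pow, smul_smul, div_eq_inv_mul]

lemma expPhi_succ_zero (a : 𝔸) (k : ℕ) : expPhi a (k + 1) 0 = 0 := by
  simp [expPhi]

lemma norm_expPhi_term_le (a : 𝔸) (k j : ℕ) {y R : ℝ} (hy : |y| ≤ R) :
    ‖(y ^ (k + j) / (k + j)! : ℝ) • a ^ j‖ ≤ R ^ k * ‖(j !⁻¹ : ℝ) • (R • a) ^ j‖ := by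
  have hR : 0 ≤ R := (abs_nonneg y).trans hy
  have hfac : (j ! : ℝ) ≤ (k + j)! := by exact_mod_cast Nat.factorial_le (Nat.le_add_left j k)
  rw [smul_pow, smul_smul, norm_smul, norm_smul, Real.norm_eq_abs, Real.norm_eq_abs,
    abs_div, abs_pow, Nat.abs_cast, abs_mul, abs_pow, abs_of_nonneg hR, abs_inv, Nat.abs_cast,
    ← mul_assoc]
  gcongr
  calc |y| ^ (k + j) / (k + j)! ≤ R ^ (k + j) / j ! := by gcongr
    _ = R ^ k * ((j ! : ℝ)⁻¹ * R ^ j) := by rw [pow_add]; ring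

lemma summable_expPhi_bound (a : 𝔸) (k : ℕ) (R : ℝ) :
    Summable fun j : ℕ => R ^ k * ‖(j !⁻¹ : ℝ) • (R • a) ^ j‖ :=
  (NormedSpace.norm_expSeries_summable' (R • a)).mul_left _

variable [CompleteSpace 𝔸]

lemma summable_expPhi_term (a : 𝔸) (k : ℕ) (τ : ℝ) :
    Summable fun j : ℕ => (τ ^ (k + j) / (k + j)! : ℝ) • a ^ j :=
  .of_norm_bounded (summable_expPhi_bound a k |τ|) fun j => norm_expPhi_term_le a k j le_rfl

lemma hasDerivAt_expPhi_succ (a : 𝔸) (k : ℕ) (τ : ℝ) :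
    HasDerivAt (expPhi a (k + 1)) (expPhi a k τ) τ := by
  have hτ : τ ∈ Metric.ball (0 : ℝ) (|τ| + 1) := by simp
  refine hasDerivAt_tsum_of_isPreconnected
    (g := fun j y => (y ^ (k + 1 + j) / (k + 1 + j)! : ℝ) • a ^ j)
    (g' := fun j y => (y ^ (k + j) / (k + j)! : ℝ) • a ^ j) (summable_expPhi_bound a k (|τ| + 1))
    Metric.isOpen_ball (convex_ball _ _).isPreconnected (fun j y _ => ?_) (fun j y hy => ?_)
    hτ (summable_expPhi_term a (k + 1) τ) hτ
  · simp only [Nat.add_right_comm k 1 j]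
    exact (hasDerivAt_pow_succ_div_factorial (k + j) y).smul_const (a ^ j)
  · exact norm_expPhi_term_le a k j (mem_ball_zero_iff.1 hy).le

lemma continuous_expPhi (a : 𝔸) (k : ℕ) : Continuous (expPhi a k) := by
  cases k with
  | zero =>
    simp only [funext (expPhi_zero_eq_exp a)]
    exact continuous_iff_continuousAt.2 fun τ => (hasDerivAt_exp_smul_const a τ).continuousAt
  | succ k =>
    exact continuous_iff_continuousAt.2 fun τ => (hasDerivAt_expPhi_succ a k τ).continuousAt

end ExpPhi

section ConvolutionByParts

variable {E F : Type*} [NormedAddCommGroup E] [NormedSpace ℝ E]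
  [NormedAddCommGroup F] [NormedSpace ℝ F] [CompleteSpace F]

lemma integral_convolution_by_parts {K k : ℝ → E →L[ℝ] F} {g g' : ℝ → E}
    (hK : ∀ τ, HasDerivAt K (k τ) τ) (hk : Continuous k) (hK0 : K 0 = 0)
    (hg : ∀ s, HasDerivAt g (g' s) s) (hg' : Continuous g') (t T : ℝ) :
    ∫ s in t..t + T, k (t + T - s) (g s) =
      K T (g t) + ∫ s in t..t + T, K (t + T - s) (g' s) := by
  have hKc : Continuous K := continuous_iff_continuousAt.2 fun τ => (hK τ).continuousAt
  have hgc : Continuous g := continuous_iff_continuousAt.2 fun s => (hg s).continuousAt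
  have hderiv : ∀ s, HasDerivAt (fun s => K (t + T - s) (g s))
      (-k (t + T - s) (g s) + K (t + T - s) (g' s)) s := fun s => by
    simpa using ((hK (t + T - s)).scomp s ((hasDerivAt_id s).const_sub (t + T))).clm_apply (hg s)
  have hint₁ : IntervalIntegrable (fun s => k (t + T - s) (g s)) volume t (t + T) :=
    ((hk.comp (continuous_sub_left _)).clm_apply hgc).intervalIntegrable _ _
  have hint₂ : IntervalIntegrable (fun s => K (t + T - s) (g' s)) volume t (t + T) :=
    ((hKc.comp (continuous_sub_left _)).clm_apply hg').intervalIntegrable _ _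
  have hFTC := intervalIntegral.integral_eq_sub_of_hasDerivAt (fun s _ => hderiv s)
    (hint₁.neg.add hint₂)
  rw [intervalIntegral.integral_add (f := fun s => -k (t + T - s) (g s)) hint₁.neg hint₂,
    intervalIntegral.integral_neg, sub_self, hK0, add_sub_cancel_left] at hFTC
  simp only [_root_.zero_apply, zero_sub] at hFTC
  linear_combination (norm := module) -hFTC

lemma integral_convolution_eq_taylor {K : ℕ → ℝ → E →L[ℝ] F}
    (hK : ∀ k τ, HasDerivAt (K (k + 1)) (K k τ) τ) (hK0 : ∀ k, K (k + 1) 0 = 0)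
    (hKc : Continuous (K 0)) {ω : ℝ → E} {r : ℕ} (hω : ContDiff ℝ r ω) (t T : ℝ) :
    ∫ s in t..t + T, K 0 (t + T - s) (ω s) =
      ∑ i ∈ Finset.range r, K (i + 1) T (iteratedDeriv i ω t) +
        ∫ s in t..t + T, K r (t + T - s) (iteratedDeriv r ω s) := by
  induction r with
  | zero => simp
  | succ r ih =>
    have hKrc : Continuous (K r) := by
      cases r with
      | zero => exact hKc
      | succ r => exact continuous_iff_continuousAt.2 fun τ => (hK r τ).continuousAt
    have hω' : ∀ s, HasDerivAt (iteratedDeriv r ω) (iteratedDeriv (r + 1) ω s) s := fun s => by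
      rw [iteratedDeriv_succ]
      exact (hω.differentiable_iteratedDeriv r (by norm_cast; omega) s).hasDerivAt
    rw [ih (hω.of_le (by norm_cast; omega)), integral_convolution_by_parts (hK r) hKrc (hK0 r) hω'
      (hω.continuous_iteratedDeriv _ le_rfl), Finset.sum_range_succ, add_assoc]

end ConvolutionByParts

section Matrix

variable {m p q : Type*} [Fintype m] [Fintype p] [Fintype q]

noncomputable def mulMulVecCLM (B : Matrix p q ℝ) : Matrix m p ℝ →L[ℝ] (q → ℝ) →L[ℝ] m → ℝ :=
  LinearMap.toContinuousLinearMap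
    (LinearMap.toContinuousLinearMap.toLinearMap ∘ₗ (Matrix.mulVecBilin ℝ ℝ).compl₂ B.mulVecLin)

lemma mulMulVecCLM_apply (B : Matrix p q ℝ) (M : Matrix m p ℝ) (v : q → ℝ) :
    mulMulVecCLM B M v = (M * B) *ᵥ v :=
  Matrix.mulVec_mulVec v M B

-- Any submultiplicative norm would do; this one induces the product topology used in `stmt5`.
attribute [local instance] Matrix.linftyOpNormedRing Matrix.linftyOpNormedAlgebra

lemma smul_Gam_eq_expPhi {n : ℕ} (A : Matrix (Fin n) (Fin n) ℝ) (i : ℕ) (τ : ℝ) :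
    (τ ^ (i + 1) / (i + 1)! : ℝ) • Gam A i τ = expPhi A (i + 1) τ := by
  rw [Gam, ← tsum_const_smul'', expPhi]
  refine tsum_congr fun j => ?_
  rw [smul_smul, Nat.add_right_comm]
  congr 1
  field_simp
  ring

lemma integral_expPhi_mul_mulVec_eq_taylor [DecidableEq m] (A : Matrix m m ℝ) (B : Matrix m q ℝ)
    {ω : ℝ → q → ℝ} {r : ℕ} (hω : ContDiff ℝ r ω) (t T : ℝ) :
    ∫ s in t..t + T, (expPhi A 0 (t + T - s) * B) *ᵥ ω s =
      ∑ i ∈ Finset.range r, (expPhi A (i + 1) T * B) *ᵥ iteratedDeriv i ω t +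
        ∫ s in t..t + T, (expPhi A r (t + T - s) * B) *ᵥ iteratedDeriv r ω s := by
  simpa only [mulMulVecCLM_apply] using integral_convolution_eq_taylor
    (K := fun k τ => mulMulVecCLM B (expPhi A k τ))
    (fun k τ => (mulMulVecCLM B).hasFDerivAt.comp_hasDerivAt τ (hasDerivAt_expPhi_succ A k τ))
    (fun k => by simp only [expPhi_succ_zero, map_zero])
    ((mulMulVecCLM B).continuous.comp (continuous_expPhi A 0)) hω t T

end Matrix

theorem stmt5_general {n q r : ℕ} (A : Matrix (Fin n) (Fin n) ℝ) (B : Matrix (Fin n) (Fin q) ℝ)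
    (ω : ℝ → Fin q → ℝ) (hω : ContDiff ℝ (r + 1) ω) (t T : ℝ) :
    (∫ s in t..(t + T), (NormedSpace.exp ((t + T - s) • A) * B).mulVec (ω s)) =
      (∑ i ∈ Finset.range (r + 1),
          (T ^ (i + 1) / (i + 1).factorial : ℝ) •
            (Gam A i T * B).mulVec (iteratedDeriv i ω t))
        + ∫ s in t..(t + T),
            ((t + T - s) ^ (r + 1) / (r + 1).factorial : ℝ) •
              (Gam A r (t + T - s) * B).mulVec (iteratedDeriv (r + 1) ω s) := by
  have expansion :=
    integral_expPhi_mul_mulVec_eq_taylor A B (r := r + 1) (by exact_mod_cast hω) t T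
  simp only [expPhi_zero_eq_exp, ← smul_Gam_eq_expPhi, Matrix.smul_mul, Matrix.smul_mulVec]
    at expansion
  exact expansion

/-- Decomposition of the disturbance convolution integral (the paper's key Lemma, Eq. (4)). -/
theorem stmt5 {n q r : ℕ} (A : Matrix (Fin n) (Fin n) ℝ) (B : Matrix (Fin n) (Fin q) ℝ)
    (ω : ℝ → Fin q → ℝ) (hω : ContDiff ℝ (r + 1) ω) (t T : ℝ) (hT : 0 ≤ T) :
    (∫ s in t..(t + T), (NormedSpace.exp ((t + T - s) • A) * B).mulVec (ω s)) =
      (∑ i ∈ Finset.range (r + 1),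
          (T ^ (i + 1) / (i + 1).factorial : ℝ) •
            (Gam A i T * B).mulVec (iteratedDeriv i ω t))
        + ∫ s in t..(t + T),
            ((t + T - s) ^ (r + 1) / (r + 1).factorial : ℝ) •
              (Gam A r (t + T - s) * B).mulVec (iteratedDeriv (r + 1) ω s) :=
  stmt5_general A B ω hω t T
end

section
/- If ω^{(r+1)} ≡ 0 (i.e., ω is a vector polynomial of degree at most r), then for the disturbed LTI system ẋ = A x + B_u u(t-h) + B_ω ω with piecewise constant u, the prediction x̂(t+T) = e^{AT} x(t) + Γ_ω(T) ω_r(t) + Γ_u-terms computed from the exact current state x(t) and exact disturbance derivatives ω_r(t) equals x(t+T) exactly. -/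
/-!
By variation of constants, `x (t + T)` is `exp (T • A) *ᵥ x t` plus the integral of
`exp ((t + T - s) • A)` against the forcing term over `[t, t + T]`. The delayed input is constant
on each `[τ k + h, τ (k + 1) + h)`, which splits its contribution into the `N + 1` integrals of the
predictor. A disturbance with `ω^(r+1) ≡ 0` is its own Taylor polynomial at `t`; integrating the
exponential series term by term, the Beta integral
`∫ σ in 0..T, σ ^ i / i! * (T - σ) ^ j / j! = T ^ (i + j + 1) / (i + j + 1)!`
turns the `i`-th Taylor term into exactly `T ^ (i + 1) / (i + 1)! • Γ_{ω,i}(T)`.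
-/

open MeasureTheory Matrix

-- Closed before the theorem, where `φ` would otherwise parse as `Nat.totient`.
section

open scoped Nat

theorem hasDerivAt_pow_sub_div_factorial (s σ : ℝ) (i : ℕ) :
    HasDerivAt (fun σ : ℝ => (s - σ) ^ (i + 1) / (i + 1)!) (-((s - σ) ^ i / i !)) σ := by
  refine ((((hasDerivAt_id σ).const_sub s).pow (i + 1)).div_const ((i + 1)! : ℝ)).congr_deriv ?_
  push_cast [Nat.factorial_succ, Nat.add_sub_cancel]
  field_simp
  simp

theorem hasDerivAt_pow_div_factorial (σ : ℝ) (i : ℕ) :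
    HasDerivAt (fun σ : ℝ => σ ^ (i + 1) / (i + 1)!) (σ ^ i / i !) σ := by
  refine ((hasDerivAt_pow (i + 1) σ).div_const ((i + 1)! : ℝ)).congr_deriv ?_
  push_cast [Nat.factorial_succ, Nat.add_sub_cancel]
  field_simp

section Taylor

variable {E : Type*} [NormedAddCommGroup E] [NormedSpace ℝ E] {f : ℝ → E}

theorem hasDerivAt_taylor_sum {r : ℕ} (hf : ContDiff ℝ (r + 1) f) (s σ : ℝ) :
    HasDerivAt (fun σ => ∑ i ∈ Finset.range (r + 1), ((s - σ) ^ i / i !) • iteratedDeriv i f σ)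
      (((s - σ) ^ r / r !) • iteratedDeriv (r + 1) f σ) σ := by
  have hderiv : ∀ i : ℕ, (i : WithTop ℕ∞) < r + 1 →
      HasDerivAt (iteratedDeriv i f) (iteratedDeriv (i + 1) f σ) σ := fun i hi => by
    rw [iteratedDeriv_succ]
    exact ((hf.differentiable_iteratedDeriv i hi) σ).hasDerivAt
  induction r with
  | zero => simpa using hderiv 0 (by simp)
  | succ r ih =>
    simp_rw [Finset.sum_range_succ _ (r + 1)]
    have hlast := (hasDerivAt_pow_sub_div_factorial s σ r).fun_smul
      (hderiv (r + 1) (by exact_mod_cast Nat.lt_succ_self _))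
    convert (ih (hf.of_le (by exact_mod_cast Nat.le_succ _)) fun i hi =>
      hderiv i (hi.trans (by exact_mod_cast Nat.lt_succ_self _))).fun_add hlast using 1
    simp only [neg_smul]
    abel

theorem eq_taylor_sum_of_iteratedDeriv_eq_zero {r : ℕ} (hf : ContDiff ℝ (r + 1) f)
    (hzero : ∀ σ, iteratedDeriv (r + 1) f σ = 0) (t s : ℝ) :
    f s = ∑ i ∈ Finset.range (r + 1), ((s - t) ^ i / i !) • iteratedDeriv i f t := by
  have hconst := is_const_of_deriv_eq_zero
    (fun σ => (hasDerivAt_taylor_sum hf s σ).differentiableAt)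
    (fun σ => by simp [(hasDerivAt_taylor_sum hf s σ).deriv, hzero]) s t
  rw [← hconst, Finset.sum_eq_single 0 (fun i _ hi => by simp [hi]) (by simp)]
  simp

end Taylor

theorem integral_pow_div_factorial_mul_sub_pow_div_factorial (c : ℝ) (i j : ℕ) :
    ∫ σ in (0 : ℝ)..c, σ ^ i / i ! * ((c - σ) ^ j / j !) = c ^ (i + j + 1) / (i + j + 1)! := by
  induction j generalizing i with
  | zero =>
    simp only [pow_zero, Nat.factorial_zero, Nat.cast_one, div_one, mul_one, add_zero,
      intervalIntegral.integral_div, integral_pow, ne_eq, Nat.add_eq_zero_iff, one_ne_zero,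
      and_false, not_false_eq_true, zero_pow, sub_zero]
    push_cast [Nat.factorial_succ]
    field_simp
  | succ j ih =>
    have hparts := intervalIntegral.integral_mul_deriv_eq_deriv_mul
      (fun σ _ => hasDerivAt_pow_sub_div_factorial c σ j)
      (fun σ _ => hasDerivAt_pow_div_factorial σ i)
      ((by fun_prop : Continuous fun σ : ℝ => -((c - σ) ^ j / j !)).intervalIntegrable 0 c)
      ((by fun_prop : Continuous fun σ : ℝ => σ ^ i / i !).intervalIntegrable 0 c)
    rw [show i + (j + 1) + 1 = i + 1 + j + 1 by ring, ← ih (i + 1)]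
    simp only [sub_self, ne_eq, Nat.add_eq_zero_iff, one_ne_zero, and_false, not_false_eq_true,
      zero_pow, zero_div, zero_mul, sub_zero, mul_zero, neg_mul, intervalIntegral.integral_neg,
      sub_neg_eq_add, zero_add] at hparts
    simpa only [mul_comm] using hparts

section BanachAlgebra

variable {𝔸 : Type*} [NormedRing 𝔸] [NormedAlgebra ℝ 𝔸]

theorem summable_pow_div_factorial_mul_norm_pow (a : 𝔸) {c : ℝ} (hc : 0 ≤ c) :
    Summable fun j : ℕ => c ^ j / j ! * ‖a ^ j‖ := by
  refine (NormedSpace.norm_expSeries_summable' (𝕂 := ℝ) (c • a)).congr fun j => ?_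
  rw [smul_pow, norm_smul, norm_smul, norm_inv, Real.norm_natCast, Real.norm_of_nonneg
    (pow_nonneg hc j)]
  ring

variable [CompleteSpace 𝔸]

theorem hasSum_integral_pow_div_factorial_smul_exp (a : 𝔸) (i : ℕ) (T : ℝ) :
    HasSum (fun j => (T ^ (i + j + 1) / (i + j + 1)!) • a ^ j)
      (∫ σ in (0 : ℝ)..T, (σ ^ i / i !) • NormedSpace.exp ((T - σ) • a)) := by
  have hseries : HasSum (fun j => ∫ σ in (0 : ℝ)..T, (σ ^ i / i ! * ((T - σ) ^ j / j !)) • a ^ j)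
      (∫ σ in (0 : ℝ)..T, (σ ^ i / i !) • NormedSpace.exp ((T - σ) • a)) := by
    refine intervalIntegral.hasSum_integral_of_dominated_convergence
      (fun j _ => |T| ^ i / i ! * (|T| ^ j / j ! * ‖a ^ j‖))
      (fun j => (by fun_prop : Continuous _).aestronglyMeasurable) (fun j => ?_)
      (.of_forall fun _ _ => (summable_pow_div_factorial_mul_norm_pow a (abs_nonneg T)).mul_left _)
      intervalIntegrable_const (.of_forall fun σ _ => ?_)
    · refine .of_forall fun σ hσ => ?_
      have hσT := Set.uIoc_subset_uIcc hσ
      have h1 : |σ| ≤ |T| := by simpa using Set.abs_sub_left_of_mem_uIcc hσT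
      have h2 : |T - σ| ≤ |T| := by simpa using Set.abs_sub_right_of_mem_uIcc hσT
      rw [norm_smul, Real.norm_eq_abs, abs_mul, abs_div, abs_div, abs_pow, abs_pow,
        Nat.abs_cast, Nat.abs_cast, ← mul_assoc]
      gcongr
    · have hexp := (NormedSpace.exp_series_hasSum_exp' (𝕂 := ℝ) ((T - σ) • a)).const_smul
        (σ ^ i / i ! : ℝ)
      simpa only [smul_pow, smul_smul, inv_mul_eq_div] using hexp
  simpa only [intervalIntegral.integral_smul_const,
    integral_pow_div_factorial_mul_sub_pow_div_factorial] using hseries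

theorem apply_tsum_eq_integral_pow_div_factorial_smul_exp {E : Type*} [NormedAddCommGroup E]
    [NormedSpace ℝ E] [CompleteSpace E] (L : 𝔸 →L[ℝ] E) (a : 𝔸) (i : ℕ) (T : ℝ) :
    L (∑' j, (T ^ (i + j + 1) / (i + j + 1)!) • a ^ j)
      = ∫ σ in (0 : ℝ)..T, (σ ^ i / i !) • L (NormedSpace.exp ((T - σ) • a)) := by
  have hcont : Continuous fun σ : ℝ => (σ ^ i / i !) • NormedSpace.exp ((T - σ) • a) :=
    ((continuous_pow i).div_const _).smul
      ((differentiable_exp_smul_const ℝ a).continuous.comp (continuous_sub_left T))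
  rw [(hasSum_integral_pow_div_factorial_smul_exp a i T).tsum_eq,
    ← L.intervalIntegral_comp_comm (hcont.intervalIntegrable 0 T)]
  simp only [map_smul]

end BanachAlgebra

theorem pow_succ_div_factorial_smul_Gam {n : ℕ} (A : Matrix (Fin n) (Fin n) ℝ) (i : ℕ) (T : ℝ) :
    (T ^ (i + 1) / (i + 1)!) • Gam A i T = ∑' j : ℕ, (T ^ (i + j + 1) / (i + j + 1)!) • A ^ j := by
  rw [Gam, ← tsum_const_smul'']
  refine tsum_congr fun j => ?_
  rw [smul_smul, add_right_comm, pow_add]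
  congr 1
  field_simp
  ring

variable {ι κ : Type*} [Fintype ι] [Fintype κ]

noncomputable def mulVecCLM : Matrix ι κ ℝ →L[ℝ] (κ → ℝ) →L[ℝ] (ι → ℝ) :=
  LinearMap.toContinuousLinearMap
    (LinearMap.toContinuousLinearMap.toLinearMap ∘ₗ Matrix.mulVecBilin ℝ ℝ)

@[simp]
theorem mulVecCLM_apply (M : Matrix ι κ ℝ) (v : κ → ℝ) : mulVecCLM M v = M *ᵥ v := rfl

section MatrixNorm

-- Any submultiplicative norm does; its topology agrees with the product topology only up to
-- unfolding instances, hence the occasional `rfl` and `change` below.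
attribute [local instance] Matrix.linftyOpNormedAddCommGroup Matrix.linftyOpNormedSpace
  Matrix.linftyOpNormedRing Matrix.linftyOpNormedAlgebra

theorem continuous_exp_sub_smul [DecidableEq ι] (A : Matrix ι ι ℝ) (c : ℝ) :
    Continuous fun s : ℝ => NormedSpace.exp ((c - s) • A) :=
  (differentiable_exp_smul_const ℝ A).continuous.comp (continuous_sub_left c)

theorem variation_of_constants [DecidableEq ι] (A : Matrix ι ι ℝ) {x f : ℝ → ι → ℝ}
    (hx : ∀ s, HasDerivAt x (A *ᵥ x s + f s) s) (t T : ℝ)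
    (hf : IntervalIntegrable (fun s => NormedSpace.exp ((t + T - s) • A) *ᵥ f s) volume t (t + T)) :
    x (t + T) = NormedSpace.exp (T • A) *ᵥ x t
      + ∫ s in t..t + T, NormedSpace.exp ((t + T - s) • A) *ᵥ f s := by
  have hexp : ∀ s, HasDerivAt (fun s => NormedSpace.exp ((t + T - s) • A))
      (-(NormedSpace.exp ((t + T - s) • A) * A)) s := fun s =>
    ((hasDerivAt_exp_smul_const A (t + T - s)).scomp s
      ((hasDerivAt_id s).const_sub (t + T))).congr_deriv (by rw [neg_one_smul]; rfl)
  have hderiv : ∀ s, HasDerivAt (fun s => NormedSpace.exp ((t + T - s) • A) *ᵥ x s)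
      (NormedSpace.exp ((t + T - s) • A) *ᵥ f s) s := fun s => by
    refine (mulVecCLM.hasDerivAt_of_bilinear (fun _ => hexp s) (fun _ => hx s)).congr_deriv ?_
    change _ *ᵥ (A *ᵥ x s + f s) + -(_ * A) *ᵥ x s = _
    rw [mulVec_add, neg_mulVec, ← mulVec_mulVec]
    abel
  rw [intervalIntegral.integral_eq_sub_of_hasDerivAt (fun s _ => hderiv s) hf]
  simp

theorem integral_pow_div_factorial_smul_exp_mulVec {n : ℕ} (A : Matrix (Fin n) (Fin n) ℝ)
    (i : ℕ) (t T : ℝ) (v : Fin n → ℝ) :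
    ∫ s in t..t + T, ((s - t) ^ i / i !) • (NormedSpace.exp ((t + T - s) • A) *ᵥ v)
      = (T ^ (i + 1) / (i + 1)!) • (Gam A i T *ᵥ v) := by
  have h := apply_tsum_eq_integral_pow_div_factorial_smul_exp (mulVecCLM.flip v) A i T
  rw [← smul_mulVec, pow_succ_div_factorial_smul_Gam]
  have hshift := intervalIntegral.integral_comp_sub_right
    (fun σ => (σ ^ i / i !) • (NormedSpace.exp ((T - σ) • A) *ᵥ v)) (a := t) (b := t + T) t
  rw [sub_self, add_sub_cancel_left] at hshift
  refine Eq.trans ?_ (hshift.trans h.symm)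
  refine intervalIntegral.integral_congr fun s _ => ?_
  simp only [sub_sub_eq_add_sub, add_comm T t]

end MatrixNorm

theorem integral_exp_mulVec_taylor_sum {n q : ℕ} (A : Matrix (Fin n) (Fin n) ℝ)
    (B : Matrix (Fin n) (Fin q) ℝ) (d : ℕ → Fin q → ℝ) (r : ℕ) (t T : ℝ) :
    ∫ s in t..t + T, NormedSpace.exp ((t + T - s) • A) *ᵥ
        (B *ᵥ ∑ i ∈ Finset.range (r + 1), ((s - t) ^ i / i !) • d i)
      = ∑ i ∈ Finset.range (r + 1), (T ^ (i + 1) / (i + 1)!) • (Gam A i T * B) *ᵥ d i := by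
  simp_rw [mulVec_sum, mulVec_smul]
  rw [intervalIntegral.integral_finsetSum fun i _ => ?_]
  · refine Finset.sum_congr rfl fun i _ => ?_
    rw [integral_pow_div_factorial_smul_exp_mulVec, mulVec_mulVec]
  · exact (((continuous_sub_right t).pow i).div_const _ |>.smul
      ((continuous_exp_sub_smul A _).matrix_mulVec continuous_const)).intervalIntegrable _ _

section Piecewise

variable {E : Type*} [NormedAddCommGroup E] {μ : Measure ℝ} {f : ℝ → E}

theorem IntervalIntegrable.trans_fin {N : ℕ} {a : Fin (N + 1) → ℝ}
    (hint : ∀ k : Fin N, IntervalIntegrable f μ (a k.castSucc) (a k.succ)) :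
    IntervalIntegrable f μ (a 0) (a (Fin.last N)) := by
  induction N with
  | zero => exact .refl
  | succ N ih =>
    refine (ih (a := a ∘ Fin.castSucc) fun k => ?_).trans (hint (Fin.last N))
    simpa only [Function.comp_apply, Fin.succ_castSucc] using hint k.castSucc

theorem IntervalIntegrable.of_eqOn_uIoo_fin {N : ℕ} {a : Fin (N + 1) → ℝ} {g : Fin N → ℝ → E}
    (hg : ∀ k, IntervalIntegrable (g k) volume (a k.castSucc) (a k.succ))
    (hfg : ∀ k, Set.EqOn f (g k) (Set.uIoo (a k.castSucc) (a k.succ))) :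
    IntervalIntegrable f volume (a 0) (a (Fin.last N)) :=
  .trans_fin fun k => (hg k).congr_uIoo (hfg k).symm

variable [NormedSpace ℝ E]

theorem intervalIntegral.sum_integral_adjacent_intervals_fin {N : ℕ} {a : Fin (N + 1) → ℝ}
    (hint : ∀ k : Fin N, IntervalIntegrable f μ (a k.castSucc) (a k.succ)) :
    ∑ k : Fin N, ∫ x in a k.castSucc..a k.succ, f x ∂μ = ∫ x in a 0..a (Fin.last N), f x ∂μ := by
  induction N with
  | zero => simp
  | succ N ih =>
    have hint' : ∀ k : Fin N, IntervalIntegrable f μ ((a ∘ Fin.castSucc) k.castSucc)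
        ((a ∘ Fin.castSucc) k.succ) := fun k => by
      simpa only [Function.comp_apply, Fin.succ_castSucc] using hint k.castSucc
    have hfirst := ih hint'
    simp only [Function.comp_apply] at hfirst
    rw [Fin.sum_univ_castSucc]
    simp only [Fin.succ_castSucc]
    rw [hfirst, ← Fin.succ_last]
    exact integral_add_adjacent_intervals (IntervalIntegrable.trans_fin hint') (hint (Fin.last N))

theorem intervalIntegral.integral_eq_sum_of_eqOn_uIoo_fin {N : ℕ} {a : Fin (N + 1) → ℝ}
    {g : Fin N → ℝ → E} (hg : ∀ k, IntervalIntegrable (g k) volume (a k.castSucc) (a k.succ))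
    (hfg : ∀ k, Set.EqOn f (g k) (Set.uIoo (a k.castSucc) (a k.succ))) :
    ∫ x in a 0..a (Fin.last N), f x = ∑ k : Fin N, ∫ x in a k.castSucc..a k.succ, g k x := by
  rw [← sum_integral_adjacent_intervals_fin fun k => (hg k).congr_uIoo (hfg k).symm]
  exact Finset.sum_congr rfl fun k _ => integral_congr_uIoo (hfg k)

end Piecewise

theorem integral_exp_mulVec_of_eqOn_Ico [DecidableEq ι] {N : ℕ} (A : Matrix ι ι ℝ)
    (B : Matrix ι κ ℝ) (c : ℝ) {a : Fin (N + 1) → ℝ} (ha : Monotone a)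
    {v : ℝ → κ → ℝ} {w : Fin N → κ → ℝ}
    (hv : ∀ k, ∀ s ∈ Set.Ico (a k.castSucc) (a k.succ), v s = w k) :
    IntervalIntegrable (fun s => NormedSpace.exp ((c - s) • A) *ᵥ (B *ᵥ v s)) volume
        (a 0) (a (Fin.last N)) ∧
      ∫ s in a 0..a (Fin.last N), NormedSpace.exp ((c - s) • A) *ᵥ (B *ᵥ v s)
        = ∑ k, ∫ s in a k.castSucc..a k.succ, (NormedSpace.exp ((c - s) • A) * B) *ᵥ w k := by
  have hpieces : ∀ k, Set.EqOn (fun s => NormedSpace.exp ((c - s) • A) *ᵥ (B *ᵥ v s))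
      (fun s => (NormedSpace.exp ((c - s) • A) * B) *ᵥ w k)
      (Set.uIoo (a k.castSucc) (a k.succ)) := fun k s hs => by
    rw [Set.uIoo_of_le (ha k.castSucc_le_succ)] at hs
    simp only [hv k s (Set.Ioo_subset_Ico_self hs), mulVec_mulVec]
  have hconst : ∀ k, IntervalIntegrable (fun s => (NormedSpace.exp ((c - s) • A) * B) *ᵥ w k)
      volume (a k.castSucc) (a k.succ) := fun k =>
    (((continuous_exp_sub_smul A c).matrix_mul continuous_const).matrix_mulVec
      continuous_const).intervalIntegrable _ _
  exact ⟨.of_eqOn_uIoo_fin hconst hpieces,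
    intervalIntegral.integral_eq_sum_of_eqOn_uIoo_fin hconst hpieces⟩

end

/-- The jumping instants of the piecewise-constant delayed input are `τ 1 < … < τ N` (with
`τ 0 = t - h`, `τ (N+1) = t + T - h` as artificial endpoints), and the value on the `k`-th
subinterval is `uv k`. -/
theorem stmt14_general {n m q r N : ℕ} (A : Matrix (Fin n) (Fin n) ℝ)
    (Bu : Matrix (Fin n) (Fin m) ℝ) (Bω : Matrix (Fin n) (Fin q) ℝ)
    (x : ℝ → Fin n → ℝ) (u : ℝ → Fin m → ℝ) (ω : ℝ → Fin q → ℝ)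
    (hω : ContDiff ℝ (r + 1) ω) (h t T : ℝ)
    (hx : ∀ s : ℝ,
      HasDerivAt x (A.mulVec (x s) + Bu.mulVec (u (s - h)) + Bω.mulVec (ω s)) s)
    (τ : Fin (N + 2) → ℝ) (hτ0 : τ 0 = t - h) (hτN : τ (Fin.last (N + 1)) = t + T - h)
    (hτmono : StrictMono τ)
    (uv : Fin (N + 1) → Fin m → ℝ)
    (hu : ∀ k : Fin (N + 1), ∀ φ : ℝ, τ k.castSucc ≤ φ → φ < τ k.succ → u φ = uv k)
    (hpoly : ∀ s : ℝ, iteratedDeriv (r + 1) ω s = 0) :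
    x (t + T) =
      (NormedSpace.exp (T • A)).mulVec (x t)
        + (∑ k : Fin (N + 1),
            ∫ s in (τ k.castSucc + h)..(τ k.succ + h),
              (NormedSpace.exp ((t + T - s) • A) * Bu).mulVec (uv k))
        + (∑ i ∈ Finset.range (r + 1),
            (T ^ (i + 1) / (i + 1).factorial : ℝ) •
              (Gam A i T * Bω).mulVec (iteratedDeriv i ω t)) := by
  obtain ⟨hinput, hinput_eq⟩ := integral_exp_mulVec_of_eqOn_Ico A Bu (t + T)
    (a := fun k => τ k + h) (fun _ _ hkl => by simpa using hτmono.monotone hkl)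
    (v := fun s => u (s - h)) fun k s hs => hu k (s - h) (by linarith [hs.1]) (by linarith [hs.2])
  simp only [hτ0, hτN, sub_add_cancel] at hinput hinput_eq
  have hdist : IntervalIntegrable (fun s => NormedSpace.exp ((t + T - s) • A) *ᵥ (Bω *ᵥ ω s))
      volume t (t + T) :=
    ((continuous_exp_sub_smul A _).matrix_mulVec
      (continuous_const.matrix_mulVec hω.continuous)).intervalIntegrable _ _
  rw [variation_of_constants A (x := x) (fun s => by simpa only [add_assoc] using hx s) t T
    (by simpa only [mulVec_add] using hinput.add hdist)]
  simp only [mulVec_add]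
  rw [intervalIntegral.integral_add hinput hdist, hinput_eq, add_assoc,
    ← integral_exp_mulVec_taylor_sum A Bω (fun i => iteratedDeriv i ω t) r t T]
  simp_rw [← eq_taylor_sum_of_iteratedDeriv_eq_zero hω hpoly t]

/-- Exact prediction for polynomial disturbances of degree ≤ r (`ω^{(r+1)} ≡ 0`): both error
terms vanish, so the predictor computed from the exact state and disturbance derivatives is
exact. The jumping instants of the
piecewise-constant delayed input are `τ 1 < … < τ N` (with `τ 0 = t - h`, `τ (N+1) = t + T - h`
as artificial endpoints), and the value on the `k`-th subinterval is `uv k`. -/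
theorem stmt14 {n m q r N : ℕ} (A : Matrix (Fin n) (Fin n) ℝ)
    (Bu : Matrix (Fin n) (Fin m) ℝ) (Bω : Matrix (Fin n) (Fin q) ℝ)
    (x : ℝ → Fin n → ℝ) (u : ℝ → Fin m → ℝ) (ω : ℝ → Fin q → ℝ)
    (hω : ContDiff ℝ (r + 1) ω) (h t T : ℝ) (hh : 0 ≤ h) (hT : 0 ≤ T)
    (hx : ∀ s : ℝ,
      HasDerivAt x (A.mulVec (x s) + Bu.mulVec (u (s - h)) + Bω.mulVec (ω s)) s)
    (τ : Fin (N + 2) → ℝ) (hτ0 : τ 0 = t - h) (hτN : τ (Fin.last (N + 1)) = t + T - h)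
    (hτmono : StrictMono τ)
    (uv : Fin (N + 1) → Fin m → ℝ)
    (hu : ∀ k : Fin (N + 1), ∀ φ : ℝ, τ k.castSucc ≤ φ → φ < τ k.succ → u φ = uv k)
    (huend : u (t + T - h) = uv (Fin.last N))
    (hpoly : ∀ s : ℝ, iteratedDeriv (r + 1) ω s = 0) :
    x (t + T) =
      (NormedSpace.exp (T • A)).mulVec (x t)
        + (∑ k : Fin (N + 1),
            ∫ s in (τ k.castSucc + h)..(τ k.succ + h),
              (NormedSpace.exp ((t + T - s) • A) * Bu).mulVec (uv k))
        + (∑ i ∈ Finset.range (r + 1),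
            (T ^ (i + 1) / (i + 1).factorial : ℝ) •
              (Gam A i T * Bω).mulVec (iteratedDeriv i ω t)) :=
  stmt14_general A Bu Bω x u ω hω h t T hx τ hτ0 hτN hτmono uv hu hpoly
end
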